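/- arXiv:2403.07549 — 5 statements merged into one kernel-verified Lean document; each statement's English description precedes it below -/
import Mathlib

section
/- Let x_i : [0,∞) → R^d (i = 1,...,N) be C^1 solutions of dx_i/dt = (1/N) Σ_j a_{ij}(t)(x_j − x_i) with a_{ij}(t) ≥ 0 continuous. Then the function γ_max(t) := max_i |x_i(t)| is non-increasing in t. -/
/-!
An agent of maximal norm is pulled only toward points of no larger norm, so its velocity makes a
non-acute angle with its position and `d/dt ‖x_i‖² ≤ 0` for it (squares, because `‖·‖` is not
differentiable at `0`). Hence the upper right Dini
derivative of `max_i ‖x_i‖²` is nonpositive, and a continuous function with this property is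
nonincreasing (the fencing theorem `image_le_of_liminf_slope_right_le_deriv_boundary`).
-/

open Set Filter Topology
open scoped RealInnerProductSpace

theorem antitoneOn_Ici_of_frequently_slope_lt {g : ℝ → ℝ} {a : ℝ} (hg : ContinuousOn g (Ici a))
    (hslope : ∀ u ∈ Ici a, ∀ r > 0, ∃ᶠ z in 𝓝[>] u, slope g u z < r) :
    AntitoneOn g (Ici a) := by
  intro s hs t _ hst
  exact image_le_of_liminf_slope_right_le_deriv_boundary (B := fun _ => g s) (B' := fun _ => 0)
    (hg.mono (Icc_subset_Ici_iff hst |>.2 hs)) le_rfl continuousOn_const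
    (fun u _ => hasDerivWithinAt_const u _ _)
    (fun u hu r hr => hslope u (le_trans hs hu.1) r hr) ⟨hst, le_rfl⟩

theorem eventually_slope_iSup_lt {ι : Type*} [Finite ι] [Nonempty ι] {f : ι → ℝ → ℝ}
    {f' : ι → ℝ} {u : ℝ} (hf : ∀ i, HasDerivAt (f i) (f' i) u)
    (hmax : ∀ i, (∀ j, f j u ≤ f i u) → f' i ≤ 0) {r : ℝ} (hr : 0 < r) :
    ∀ᶠ z in 𝓝[>] u, slope (fun t => ⨆ i, f i t) u z < r := by
  set M := ⨆ i, f i u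
  have hle : ∀ i, f i u ≤ M := fun i => le_ciSup (Finite.bddAbove_range (fun i => f i u)) i
  have hquot : ∀ i, ∀ᶠ z in 𝓝[>] u, (f i z - M) / (z - u) < r := by
    intro i
    rcases (hle i).lt_or_eq with hlt | heq
    · have hbelow : ∀ᶠ z in 𝓝[>] u, f i z < M :=
        ((hf i).continuousAt.eventually_lt_const hlt).filter_mono nhdsWithin_le_nhds
      filter_upwards [hbelow, self_mem_nhdsWithin] with z hz hzu
      exact (div_neg_of_neg_of_pos (sub_neg.2 hz) (sub_pos.2 hzu)).trans hr
    · have hmax_i : ∀ j, f j u ≤ f i u := fun j => heq ▸ hle j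
      have hslope : Tendsto (slope (f i) u) (𝓝[>] u) (𝓝 (f' i)) :=
        (hasDerivAt_iff_tendsto_slope.1 (hf i)).mono_left
          (nhdsWithin_mono u fun z hz => ne_of_gt hz)
      filter_upwards [hslope.eventually_lt_const ((hmax i hmax_i).trans_lt hr)] with z hz
      rwa [slope_def_field, heq] at hz
  filter_upwards [eventually_all.2 hquot] with z hz
  obtain ⟨i, hi⟩ := exists_eq_ciSup_of_finite (f := fun i => f i z)
  rw [slope_def_field, ← hi]
  exact hz i

theorem antitoneOn_iSup_of_hasDerivAt_nonpos_at_max {ι : Type*} [Fintype ι] [Nonempty ι]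
    {f f' : ι → ℝ → ℝ} {a : ℝ} (hf : ∀ i, ∀ t ∈ Ici a, HasDerivAt (f i) (f' i t) t)
    (hmax : ∀ t ∈ Ici a, ∀ i, (∀ j, f j t ≤ f i t) → f' i t ≤ 0) :
    AntitoneOn (fun t => ⨆ i, f i t) (Ici a) := by
  refine antitoneOn_Ici_of_frequently_slope_lt (fun u hu => ContinuousAt.continuousWithinAt ?_)
    fun u hu r hr => (eventually_slope_iSup_lt (fun i => hf i u hu) (hmax u hu) hr).frequently
  simp_rw [← Finset.sup'_univ_eq_ciSup]
  exact ContinuousAt.finset_sup'_apply _ fun i _ => (hf i u hu).continuousAt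

theorem inner_sub_nonpos_of_norm_le {E : Type*} [NormedAddCommGroup E] [InnerProductSpace ℝ E]
    {y z : E} (h : ‖z‖ ≤ ‖y‖) : ⟪y, z - y⟫ ≤ 0 := by
  rw [inner_sub_right, real_inner_self_eq_norm_mul_norm]
  nlinarith [real_inner_le_norm y z, norm_nonneg y]

theorem inner_sum_smul_sub_nonpos_of_norm_le {E ι : Type*} [NormedAddCommGroup E]
    [InnerProductSpace ℝ E] {s : Finset ι} {y : ι → E} {c : ι → ℝ} {i : ι}
    (hc : ∀ j ∈ s, 0 ≤ c j) (hy : ∀ j ∈ s, ‖y j‖ ≤ ‖y i‖) :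
    ⟪y i, ∑ j ∈ s, c j • (y j - y i)⟫ ≤ 0 := by
  rw [inner_sum]
  refine Finset.sum_nonpos fun j hj => ?_
  rw [real_inner_smul_right]
  exact mul_nonpos_of_nonneg_of_nonpos (hc j hj) (inner_sub_nonpos_of_norm_le (hy j hj))

theorem gammaMax_antitone_general
    (N d : ℕ) (hN : 2 ≤ N)
    (x : Fin N → ℝ → EuclideanSpace ℝ (Fin d))
    (a : Fin N → Fin N → ℝ → ℝ)
    (ha : ∀ i j t, 0 ≤ a i j t)
    (hx : ∀ i, ∀ t ≥ (0:ℝ), HasDerivAt (x i)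
      ((1 / (N : ℝ)) • ∑ j, a i j t • (x j t - x i t)) t) :
    AntitoneOn (fun t => ⨆ i, ‖x i t‖) (Set.Ici (0:ℝ)) := by
  have : Nonempty (Fin N) := ⟨⟨0, by omega⟩⟩
  have hsq : AntitoneOn (fun t => ⨆ i, ‖x i t‖ ^ 2) (Ici 0) := by
    refine antitoneOn_iSup_of_hasDerivAt_nonpos_at_max (fun i t ht => (hx i t ht).norm_sq)
      fun t _ i hi => ?_
    have hnorm : ∀ j, ‖x j t‖ ≤ ‖x i t‖ := fun j =>
      (pow_le_pow_iff_left₀ (norm_nonneg _) (norm_nonneg _) two_ne_zero).1 (hi j)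
    have hinward := inner_sum_smul_sub_nonpos_of_norm_le (s := Finset.univ)
      (fun j _ => ha i j t) fun j _ => hnorm j
    rw [real_inner_smul_right]
    exact mul_nonpos_of_nonneg_of_nonpos zero_le_two
      (mul_nonpos_of_nonneg_of_nonpos (by positivity) hinward)
  have hsqrt : (fun t => ⨆ i, ‖x i t‖) = fun t => √(⨆ i, ‖x i t‖ ^ 2) := by
    funext t
    rw [Real.sqrt_monotone.map_ciSup_of_continuousAt Real.continuous_sqrt.continuousAt
      (Finite.bddAbove_range _)]
    simp only [Real.sqrt_sq (norm_nonneg _)]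
  rw [hsqrt]
  exact Real.sqrt_monotone.comp_antitoneOn hsq

theorem gammaMax_antitone
    (N d : ℕ) (hN : 2 ≤ N)
    (x : Fin N → ℝ → EuclideanSpace ℝ (Fin d))
    (a : Fin N → Fin N → ℝ → ℝ)
    (ha_cont : ∀ i j, Continuous (a i j))
    (ha : ∀ i j t, 0 ≤ a i j t)
    (hx : ∀ i, ∀ t ≥ (0:ℝ), HasDerivAt (x i)
      ((1 / (N : ℝ)) • ∑ j, a i j t • (x j t - x i t)) t) :
    AntitoneOn (fun t => ⨆ i, ‖x i t‖) (Set.Ici (0:ℝ)) :=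
  gammaMax_antitone_general N d hN x a ha hx
end

section
/- Let x_i : [0,∞) → R^d be C^1 solutions of dx_i/dt = (1/N) Σ_j a_{ij}(t)(x_j − x_i) with 0 ≤ a_{ij}(t) continuous, and let C ⊆ R^d be a closed convex set. If x_i(t_0) ∈ C for all i and some t_0 ≥ 0, then x_i(t) ∈ C for all t ≥ t_0 and all i. -/
open scoped BigOperators

open Set Filter Topology

/-!
Separate a point outside `C` from `C` by a continuous linear functional `f`. Along the flow,
`f (x j)` has derivative `(1/N) ∑ₖ aⱼₖ (f (x k) - f (x j))`, which is nonpositive whenever `j`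
maximizes `f (x j)`; hence `maxⱼ f (x j t)` is nonincreasing, and no agent can cross the level
that separates `C` from the point.
-/

lemma eventually_lt_add_mul_of_hasDerivAt {g : ℝ → ℝ} {g' M r τ : ℝ} (hg : HasDerivAt g g' τ)
    (hle : g τ ≤ M) (hmax : g τ = M → g' ≤ 0) (hr : 0 < r) :
    ∀ᶠ z in 𝓝[>] τ, g z < M + r * (z - τ) := by
  rcases hle.lt_or_eq with hlt | heq
  · have hnear : ∀ᶠ z in 𝓝 τ, g z < M := hg.continuousAt.eventually (gt_mem_nhds hlt)
    filter_upwards [nhdsWithin_le_nhds hnear, self_mem_nhdsWithin] with z hz hτz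
    nlinarith [mul_pos hr (sub_pos.2 (mem_Ioi.1 hτz))]
  · have hslope : ∀ᶠ z in 𝓝[>] τ, slope g τ z < r :=
      hg.hasDerivWithinAt.limsup_slope_le' (lt_irrefl τ) ((hmax heq).trans_lt hr)
    filter_upwards [hslope, self_mem_nhdsWithin] with z hz hτz
    rw [slope_def_field, div_lt_iff₀ (sub_pos.2 (mem_Ioi.1 hτz))] at hz
    linarith

lemma antitoneOn_sup'_of_deriv_nonpos_of_max {ι : Type*} (s : Finset ι) (hs : s.Nonempty)
    {g g' : ι → ℝ → ℝ} {a : ℝ} (hg : ∀ j ∈ s, ∀ τ ≥ a, HasDerivAt (g j) (g' j τ) τ)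
    (hmax : ∀ j ∈ s, ∀ τ ≥ a, (∀ k ∈ s, g k τ ≤ g j τ) → g' j τ ≤ 0) :
    AntitoneOn (fun τ => s.sup' hs fun j => g j τ) (Ici a) := by
  set F : ℝ → ℝ := fun τ => s.sup' hs fun j => g j τ
  intro p hp q hq hpq
  have hFcont : ContinuousOn F (Icc p q) := fun τ hτ =>
    (ContinuousAt.finset_sup'_apply hs fun j hj =>
      (hg j hj τ (le_trans hp hτ.1)).continuousAt).continuousWithinAt
  refine image_le_of_liminf_slope_right_le_deriv_boundary (B := fun _ => F p) (B' := 0) hFcont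
    le_rfl continuousOn_const (fun _ _ => hasDerivWithinAt_const _ _ _) ?_ ⟨hpq, le_rfl⟩
  intro τ hτ r hr
  have hτa : a ≤ τ := le_trans hp hτ.1
  have hbelow : ∀ j ∈ s, ∀ᶠ z in 𝓝[>] τ, g j z < F τ + r * (z - τ) := fun j hj =>
    eventually_lt_add_mul_of_hasDerivAt (hg j hj τ hτa) (s.le_sup' (fun j => g j τ) hj)
      (fun heq => hmax j hj τ hτa fun k hk => heq ▸ s.le_sup' (fun j => g j τ) hk) hr
  refine Eventually.frequently ?_
  filter_upwards [(s.eventually_all).2 hbelow, self_mem_nhdsWithin] with z hz hτz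
  have hFz : F z < F τ + r * (z - τ) := (s.sup'_lt_iff hs).2 hz
  rw [slope_def_field, div_lt_iff₀ (sub_pos.2 (mem_Ioi.1 hτz))]
  linarith

lemma apply_consensus_velocity_nonpos {E ι : Type*} [AddCommGroup E] [Module ℝ E] [Fintype ι]
    (f : E →ₗ[ℝ] ℝ) (c : ℝ) (hc : 0 ≤ c) (w : ι → ℝ) (hw : ∀ k, 0 ≤ w k) (y : ι → E) (j : ι)
    (hj : ∀ k, f (y k) ≤ f (y j)) :
    f (c • ∑ k, w k • (y k - y j)) ≤ 0 := by
  simp only [map_smul, map_sum, map_sub, smul_eq_mul]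
  exact mul_nonpos_of_nonneg_of_nonpos hc
    (Finset.sum_nonpos fun k _ => mul_nonpos_of_nonneg_of_nonpos (hw k) (sub_nonpos.2 (hj k)))

theorem convex_invariance_general
    (N d : ℕ)
    (x : Fin N → ℝ → EuclideanSpace ℝ (Fin d))
    (a : Fin N → Fin N → ℝ → ℝ)
    (ha : ∀ i j t, 0 ≤ a i j t)
    (hx : ∀ i, ∀ t ≥ (0:ℝ), HasDerivAt (x i)
      ((1 / (N : ℝ)) • ∑ j, a i j t • (x j t - x i t)) t)
    (C : Set (EuclideanSpace ℝ (Fin d))) (hC_closed : IsClosed C) (hC_conv : Convex ℝ C)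
    (t₀ : ℝ) (ht₀ : 0 ≤ t₀) (h0 : ∀ i, x i t₀ ∈ C) :
    ∀ t ≥ t₀, ∀ i, x i t ∈ C := by
  intro t ht i
  by_contra hxC
  obtain ⟨f, u, hfC, hfx⟩ := geometric_hahn_banach_closed_point hC_conv hC_closed hxC
  have hne : (Finset.univ : Finset (Fin N)).Nonempty := ⟨i, Finset.mem_univ i⟩
  have hmono := antitoneOn_sup'_of_deriv_nonpos_of_max Finset.univ hne (a := t₀)
    (g := fun j τ => f (x j τ)) (g' := fun j τ => f ((1 / (N : ℝ)) • ∑ k, a j k τ • (x k τ - x j τ)))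
    (fun j _ τ hτ => f.hasFDerivAt.comp_hasDerivAt τ (hx j τ (ht₀.trans hτ)))
    (fun j _ τ _ hj => apply_consensus_velocity_nonpos f.toLinearMap _ (by positivity) _
      (fun k => ha j k τ) _ j fun k => hj k (Finset.mem_univ k))
  have hdecay := hmono (mem_Ici.2 le_rfl) ht ht
  have hstart : (Finset.univ.sup' hne fun j => f (x j t₀)) < u :=
    (Finset.sup'_lt_iff hne).2 fun j _ => hfC _ (h0 j)
  have hend : f (x i t) ≤ Finset.univ.sup' hne fun j => f (x j t) :=
    Finset.le_sup' (fun j => f (x j t)) (Finset.mem_univ i)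
  linarith

theorem convex_invariance
    (N d : ℕ)
    (x : Fin N → ℝ → EuclideanSpace ℝ (Fin d))
    (a : Fin N → Fin N → ℝ → ℝ)
    (ha_cont : ∀ i j, Continuous (a i j))
    (ha : ∀ i j t, 0 ≤ a i j t)
    (hx : ∀ i, ∀ t ≥ (0:ℝ), HasDerivAt (x i)
      ((1 / (N : ℝ)) • ∑ j, a i j t • (x j t - x i t)) t)
    (C : Set (EuclideanSpace ℝ (Fin d))) (hC_closed : IsClosed C) (hC_conv : Convex ℝ C)
    (t₀ : ℝ) (ht₀ : 0 ≤ t₀) (h0 : ∀ i, x i t₀ ∈ C) :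
    ∀ t ≥ t₀, ∀ i, x i t ∈ C :=
  convex_invariance_general N d x a ha hx C hC_closed hC_conv t₀ ht₀ h0
end

section
/- Define ψ(α, z, τ) := α + e^{−K τ}(z − α) for K > 0. Let x_i : [θ, θ+T] → R (i = 1,...,N) solve dx_i/dt = (1/N) Σ_j a_{ij}(t)(x_j − x_i) with 0 ≤ a_{ij}(t), and suppose (1/N) Σ_j a_{ij}(t) ≤ K for all t and i, and x_j(θ) ≥ α for all j. If for some index i and some τ* ∈ [0,T] it holds x_i(θ + τ*) ≥ ψ(α, z, τ*) with z ≥ α, then x_i(θ + τ) ≥ ψ(α, z, τ) for all τ ∈ [τ*, T]. -/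
open scoped BigOperators

/-!
A minimizer `x j` of the configuration has nonnegative drift, so the minimum never decreases and
`x j ≥ α` persists. Given that floor, the row bound yields `x i' ≥ -K (x i - α)`, hence
`t ↦ exp (K t) (x i t - α)` is nondecreasing; multiplied out, this is the barrier inequality.
-/

open Set Filter Topology

theorem HasDerivAt.nonpos_of_eventually_le_left {g : ℝ → ℝ} {g' t : ℝ} (hg : HasDerivAt g g' t)
    (hmin : ∀ᶠ s in 𝓝[<] t, g t ≤ g s) : g' ≤ 0 := by
  refine le_of_tendsto (hasDerivAt_iff_tendsto_slope_left_right.1 hg).1 ?_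
  filter_upwards [hmin, self_mem_nhdsWithin] with s hs hst
  rw [slope_def_field]
  exact div_nonpos_of_nonneg_of_nonpos (sub_nonneg.2 hs) (sub_nonpos.2 (le_of_lt hst))

/-- At the first time `t₀` some `f j` reaches `c`, that `f j` is a minimizer and has stayed above
`f j t₀` just before `t₀`, so its derivative cannot be positive. -/
theorem lt_of_forall_minimizer_deriv_pos {ι : Type*} [Finite ι] {f f' : ι → ℝ → ℝ}
    {a b c : ℝ} (hf : ∀ j, ∀ t ∈ Icc a b, HasDerivAt (f j) (f' j t) t)
    (hmin : ∀ t ∈ Ioc a b, ∀ j, (∀ k, f j t ≤ f k t) → 0 < f' j t)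
    (ha : ∀ j, c < f j a) : ∀ t ∈ Icc a b, ∀ j, c < f j t := by
  by_contra! hbad
  set S := ⋃ j, Icc a b ∩ f j ⁻¹' Iic c
  have hS : IsCompact S := by
    refine isCompact_Icc.of_isClosed_subset (isClosed_iUnion_of_finite fun j => ?_)
      (iUnion_subset fun j => inter_subset_left)
    exact ContinuousOn.preimage_isClosed_of_isClosed
      (fun t ht => (hf j t ht).continuousAt.continuousWithinAt) isClosed_Icc isClosed_Iic
  obtain ⟨t, ht, j, hjt⟩ := hbad
  obtain ⟨t₀, ht₀S, ht₀least⟩ := hS.exists_isLeast ⟨t, mem_iUnion.2 ⟨j, ht, hjt⟩⟩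
  obtain ⟨j, ht₀, hjt₀ : f j t₀ ≤ c⟩ := mem_iUnion.1 ht₀S
  have hat₀ : a < t₀ := lt_of_le_of_ne ht₀.1 fun h => (ha j).not_ge (h ▸ hjt₀)
  have hbefore : ∀ᶠ s in 𝓝[<] t₀, ∀ k, c < f k s := by
    filter_upwards [Ioo_mem_nhdsLT hat₀] with s hs k
    by_contra! hks
    exact hs.2.not_ge (ht₀least (mem_iUnion.2 ⟨k, ⟨hs.1.le, hs.2.le.trans ht₀.2⟩, hks⟩))
  have hbound : ∀ k, c ≤ f k t₀ := fun k =>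
    ge_of_tendsto ((hf k t₀ ht₀).continuousAt.tendsto.mono_left nhdsWithin_le_nhds)
      (hbefore.mono fun s hs => (hs k).le)
  have hjc : f j t₀ = c := le_antisymm hjt₀ (hbound j)
  have hpos := hmin t₀ ⟨hat₀, ht₀.2⟩ j fun k => hjc ▸ hbound k
  refine hpos.not_ge ((hf j t₀ ht₀).nonpos_of_eventually_le_left ?_)
  exact hbefore.mono fun s hs => hjc ▸ (hs j).le

theorem le_of_forall_minimizer_deriv_nonneg {ι : Type*} [Finite ι] {f f' : ι → ℝ → ℝ}
    {a b c : ℝ} (hf : ∀ j, ∀ t ∈ Icc a b, HasDerivAt (f j) (f' j t) t)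
    (hmin : ∀ t ∈ Ioc a b, ∀ j, (∀ k, f j t ≤ f k t) → 0 ≤ f' j t)
    (ha : ∀ j, c ≤ f j a) : ∀ t ∈ Icc a b, ∀ j, c ≤ f j t := by
  intro t ht j
  -- Adding `δ * (s - a + 1)` to every `f k` keeps the minimizers and makes their derivatives
  -- positive; `δ` is chosen so that the perturbation equals `ε` at time `t`.
  refine le_of_forall_pos_lt_add fun ε hε => ?_
  have hden : 0 < t - a + 1 := by linarith [ht.1]
  set δ := ε / (t - a + 1)
  have hδ : 0 < δ := div_pos hε hden
  have hperturb : ∀ s, HasDerivAt (fun s => δ * (s - a + 1)) δ s := fun s => by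
    simpa using (((hasDerivAt_id s).sub_const a).add_const 1).const_mul δ
  have hlt := lt_of_forall_minimizer_deriv_pos (c := c) (f := fun k s => f k s + δ * (s - a + 1))
    (fun k s hs => (hf k s hs).add (hperturb s))
    (fun s hs k hk => add_pos_of_nonneg_of_pos (hmin s hs k fun l => by simpa using hk l) hδ)
    (fun k => by linarith [ha k]) t ht j
  have hδε : δ * (t - a + 1) = ε := div_mul_cancel₀ ε hden.ne'
  linarith

theorem neg_mul_sub_le_mul_sum_mul_sub {ι : Type*} [Fintype ι] {w y : ι → ℝ} {c K α y₀ : ℝ}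
    (hc : 0 ≤ c) (hw : ∀ k, 0 ≤ w k) (hK : c * ∑ k, w k ≤ K) (hy : ∀ k, α ≤ y k)
    (hy₀ : α ≤ y₀) : -K * (y₀ - α) ≤ c * ∑ k, w k * (y k - y₀) :=
  calc -K * (y₀ - α) = K * (α - y₀) := by ring
    _ ≤ (c * ∑ k, w k) * (α - y₀) := mul_le_mul_of_nonpos_right hK (by linarith)
    _ = c * ∑ k, w k * (α - y₀) := by rw [mul_assoc, Finset.sum_mul]
    _ ≤ c * ∑ k, w k * (y k - y₀) := by
      gcongr with k
      · exact hw k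
      · exact hy k

theorem monotoneOn_exp_mul_sub_of_deriv_ge {f f' : ℝ → ℝ} {K α a b : ℝ}
    (hf : ∀ t ∈ Icc a b, HasDerivAt f (f' t) t) (hf' : ∀ t ∈ Ioo a b, -K * (f t - α) ≤ f' t) :
    MonotoneOn (fun t => Real.exp (K * t) * (f t - α)) (Icc a b) := by
  have hF : ∀ t ∈ Icc a b, HasDerivAt (fun t => Real.exp (K * t) * (f t - α))
      (Real.exp (K * t) * (K * (f t - α) + f' t)) t := fun t ht => by
    have hexp : HasDerivAt (fun t => Real.exp (K * t)) (Real.exp (K * t) * K) t := by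
      simpa using ((hasDerivAt_id t).const_mul K).exp
    exact (hexp.mul ((hf t ht).sub_const α)).congr_deriv (by ring)
  refine monotoneOn_of_hasDerivWithinAt_nonneg
    (f' := fun t => Real.exp (K * t) * (K * (f t - α) + f' t)) (convex_Icc a b)
    (fun t ht => (hF t ht).continuousAt.continuousWithinAt) (fun t ht => ?_) fun t ht => ?_
  · rw [interior_Icc] at ht
    exact (hF t (Ioo_subset_Icc_self ht)).hasDerivWithinAt
  · rw [interior_Icc] at ht
    have := hf' t ht
    exact mul_nonneg (Real.exp_pos _).le (by linarith)

theorem psi_le_iff_exp_mul_sub_le (K θ τ α z y : ℝ) :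
    α + Real.exp (-K * τ) * (z - α) ≤ y ↔
      Real.exp (K * θ) * (z - α) ≤ Real.exp (K * (θ + τ)) * (y - α) := by
  rw [mul_add, Real.exp_add, mul_assoc, mul_le_mul_iff_right₀ (Real.exp_pos _), neg_mul,
    Real.exp_neg, ← le_sub_iff_add_le', inv_mul_le_iff₀ (Real.exp_pos _)]

theorem barrier_lemma_psi_general
    (N : ℕ)
    (K T θ α z : ℝ)
    (x : Fin N → ℝ → ℝ)
    (a : Fin N → Fin N → ℝ → ℝ)
    (ha : ∀ i j t, 0 ≤ a i j t)
    (haK : ∀ i t, (1 / (N : ℝ)) * ∑ j, a i j t ≤ K)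
    (hx : ∀ i, ∀ t ∈ Set.Icc θ (θ + T), HasDerivAt (x i)
      ((1 / (N : ℝ)) * ∑ j, a i j t * (x j t - x i t)) t)
    (hinit : ∀ j, α ≤ x j θ)
    (i : Fin N) (τstar : ℝ) (hτstar : τstar ∈ Set.Icc 0 T)
    (hstart : α + Real.exp (-K * τstar) * (z - α) ≤ x i (θ + τstar)) :
    ∀ τ ∈ Set.Icc τstar T,
      α + Real.exp (-K * τ) * (z - α) ≤ x i (θ + τ) := by
  intro τ hτ
  have hN : (0 : ℝ) ≤ 1 / N := by positivity
  have hfloor : ∀ t ∈ Icc θ (θ + T), ∀ j, α ≤ x j t :=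
    le_of_forall_minimizer_deriv_nonneg hx (fun t _ j hj => mul_nonneg hN <|
      Finset.sum_nonneg fun k _ => mul_nonneg (ha j k t) (sub_nonneg.2 (hj k))) hinit
  have hmono := monotoneOn_exp_mul_sub_of_deriv_ge (K := K) (α := α) (hx i) fun t ht =>
    neg_mul_sub_le_mul_sum_mul_sub hN (ha i · t) (haK i t)
      (hfloor t (Ioo_subset_Icc_self ht)) (hfloor t (Ioo_subset_Icc_self ht) i)
  rw [psi_le_iff_exp_mul_sub_le K θ] at hstart ⊢
  exact hstart.trans <| hmono ⟨by linarith [hτstar.1], by linarith [hτ.1, hτ.2]⟩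
    ⟨by linarith [hτstar.1, hτ.1], by linarith [hτ.2]⟩ (by linarith [hτ.1])

theorem barrier_lemma_psi
    (N : ℕ) (hN : 1 ≤ N)
    (K T θ α z : ℝ) (hK : 0 < K) (hT : 0 ≤ T) (hθ : 0 ≤ θ) (hz : α ≤ z)
    (x : Fin N → ℝ → ℝ)
    (a : Fin N → Fin N → ℝ → ℝ)
    (ha : ∀ i j t, 0 ≤ a i j t)
    (haK : ∀ i t, (1 / (N : ℝ)) * ∑ j, a i j t ≤ K)
    (hx : ∀ i, ∀ t ∈ Set.Icc θ (θ + T), HasDerivAt (x i)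
      ((1 / (N : ℝ)) * ∑ j, a i j t * (x j t - x i t)) t)
    (hinit : ∀ j, α ≤ x j θ)
    (i : Fin N) (τstar : ℝ) (hτstar : τstar ∈ Set.Icc 0 T)
    (hstart : α + Real.exp (-K * τstar) * (z - α) ≤ x i (θ + τstar)) :
    ∀ τ ∈ Set.Icc τstar T,
      α + Real.exp (-K * τ) * (z - α) ≤ x i (θ + τ) :=
  barrier_lemma_psi_general N K T θ α z x a ha haK hx hinit i τstar hτstar hstart
end

section
/- Let x_i : [0,∞) → R solve dx_i/dt = (λ_i/N) Σ_j M_{ij}(t) φ(|x_i − x_j|)(x_j − x_i), where φ is Lipschitz, φ_min := min{φ(r) : 0 ≤ r ≤ D(0)} > 0 with D(0) the initial diameter, each M_{ij} : [0,∞) → [0,1] is measurable and satisfies ∫_t^{t+T} M_{ij}(s) ds ≥ μ for all t ≥ 0 (fixed T, μ > 0), and λ_i ≡ 1. Then consensus holds: lim_{t→∞} (x_i(t) − x_j(t)) = 0 for all i, j. -/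
/-!
While all agents lie in a box `[lo, hi]` of width at most the initial diameter, their pairwise
distances stay in the range where `φ > 0`, so every weight `M i j φ(|x i - x j|) / N` is
nonnegative; a Grönwall estimate on the squared excursions out of the box then shows that the box is
never left. Hence the spread `max x - min x` is nonincreasing. Over each window of length `T`,
persistent excitation turns this into a definite contraction: the agent `k` that is lowest at the
start stays `e^{-ΦT}` times the spread below the top, and every agent is pulled towards `k` with
total weight at least `μ φ_min / N`, so it ends the window a fixed fraction `c` of the spread below
the top. The spread therefore decays geometrically.
-/

open MeasureTheory Filter Set Real Topology

theorem hasDerivAt_max_zero_sq (u : ℝ) : HasDerivAt (fun v => max v 0 ^ 2) (2 * max u 0) u := by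
  rw [hasDerivAt_iff_isLittleO]
  refine (Asymptotics.IsBigO.of_bound 1 (Eventually.of_forall fun v => ?_)).trans_isLittleO
    (Asymptotics.isLittleO_pow_sub_sub u one_lt_two)
  -- the remainder of the convex function `max v 0 ^ 2` lies between `0` and `(v - u) ^ 2`
  simp only [Real.norm_eq_abs, abs_pow, sq_abs, one_mul, smul_eq_mul, abs_le]
  rcases le_total u 0 with hu | hu <;> rcases le_total v 0 with hv | hv <;>
    simp only [max_eq_left, max_eq_right, hu, hv] <;> constructor <;> nlinarith

theorem two_mul_max_zero_mul_sub_le {a K u v : ℝ} (ha : 0 ≤ a) (haK : a ≤ K) :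
    2 * max u 0 * (a * (v - u)) ≤ K * (max u 0 ^ 2 + max v 0 ^ 2) := by
  rcases le_total u 0 with hu | hu
  · rw [max_eq_right hu]; nlinarith [sq_nonneg (max v 0)]
  · have hq : 0 ≤ max v 0 := le_max_right v 0
    rw [max_eq_left hu]
    calc 2 * u * (a * (v - u)) ≤ 2 * u * (a * max v 0) := by
          gcongr; linarith [le_max_left v 0]
      _ ≤ 2 * u * (K * max v 0) := by gcongr
      _ ≤ K * (u ^ 2 + max v 0 ^ 2) := by nlinarith [sq_nonneg (u - max v 0)]

theorem add_integral_le_exp_mul_of_hasDerivAt {y y' h : ℝ → ℝ} {a b Φ : ℝ} (hab : a ≤ b)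
    (hΦ : 0 ≤ Φ) (hy : ∀ s ∈ Icc a b, HasDerivAt y (y' s) s) (hh : ∀ s ∈ Icc a b, 0 ≤ h s)
    (hint : IntervalIntegrable h volume a b) (hle : ∀ s ∈ Icc a b, h s - Φ * y s ≤ y' s) :
    y a + ∫ s in a..b, h s ≤ exp (Φ * (b - a)) * y b := by
  have hF : ∀ s ∈ Icc a b, HasDerivAt (fun s => exp (Φ * (s - a)) * y s)
      (exp (Φ * (s - a)) * (Φ * y s + y' s)) s := fun s hs => by
    refine ((((hasDerivAt_id s).sub_const a).const_mul Φ).exp.fun_mul (hy s hs)).congr_deriv ?_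
    simp only [id]; ring
  have key := intervalIntegral.integral_le_sub_of_hasDeriv_right_of_le hab
    (fun s hs => (hF s hs).continuousAt.continuousWithinAt)
    (fun s hs => (hF s (Ioo_subset_Icc_self hs)).hasDerivWithinAt)
    ((intervalIntegrable_iff_integrableOn_Icc_of_le hab).1 hint) fun s hs => ?_
  · simp only [sub_self, mul_zero, exp_zero, one_mul] at key
    linarith
  · have hs' := Ioo_subset_Icc_self hs
    have h1 : 1 ≤ exp (Φ * (s - a)) := one_le_exp (mul_nonneg hΦ (by linarith [hs.1]))
    nlinarith [hle s hs', hh s hs']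

theorem Finset.mul_sub_le_sum_mul_sub {ι : Type*} (S : Finset ι) {w y : ι → ℝ} {z Φ : ℝ} {k : ι}
    (hk : k ∈ S) (hw : ∀ j ∈ S, 0 ≤ w j) (hy : ∀ j ∈ S, 0 ≤ y j) (hz : 0 ≤ z)
    (hΦ : ∑ j ∈ S, w j ≤ Φ) : w k * y k - Φ * z ≤ ∑ j ∈ S, w j * (y j - z) := by
  simp only [mul_sub, Finset.sum_sub_distrib, ← Finset.sum_mul]
  have := Finset.single_le_sum (fun j hj => mul_nonneg (hw j hj) (hy j hj)) hk
  nlinarith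

theorem IsCompact.exists_forall_mem_Icc_of_pos {α : Type*} [TopologicalSpace α] {K : Set α}
    {f : α → ℝ} (hK : IsCompact K) (hf : ContinuousOn f K) (hpos : ∀ r ∈ K, 0 < f r) :
    ∃ m M, 0 < m ∧ 0 < M ∧ ∀ r ∈ K, f r ∈ Icc m M := by
  rcases K.eq_empty_or_nonempty with rfl | hne
  · exact ⟨1, 1, one_pos, one_pos, by simp⟩
  obtain ⟨r₀, hr₀, hmin⟩ := hK.exists_isMinOn hne hf
  obtain ⟨r₁, hr₁, hmax⟩ := hK.exists_isMaxOn hne hf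
  exact ⟨f r₀, f r₁, hpos r₀ hr₀, hpos r₁ hr₁, fun r hr => ⟨hmin hr, hmax hr⟩⟩

theorem tendsto_zero_of_antitoneOn_of_le_mul {D : ℝ → ℝ} {T q : ℝ} (hT : 0 < T) (hq : q < 1)
    (hD : ∀ t, 0 ≤ D t) (hanti : AntitoneOn D (Ici 0)) (hstep : ∀ t ≥ 0, D (t + T) ≤ q * D t) :
    Tendsto D atTop (𝓝 0) := by
  have hgeom : ∀ n : ℕ, D (n * T) ≤ max q 0 ^ n * D 0 := by
    intro n
    induction n with
    | zero => simp
    | succ n ih =>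
      calc D ((n + 1 : ℕ) * T) = D (n * T + T) := by push_cast; ring_nf
        _ ≤ max q 0 * D (n * T) :=
          (hstep _ (by positivity)).trans (mul_le_mul_of_nonneg_right (le_max_left q 0) (hD _))
        _ ≤ max q 0 ^ (n + 1) * D 0 := by
          rw [pow_succ', mul_assoc]; exact mul_le_mul_of_nonneg_left ih (le_max_right q 0)
  have hlim : Tendsto (fun t => max q 0 ^ ⌊t / T⌋₊ * D 0) atTop (𝓝 0) := by
    simpa using ((tendsto_pow_atTop_nhds_zero_of_lt_one (le_max_right q 0)
      (max_lt hq one_pos)).comp (tendsto_nat_floor_atTop.comp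
        (tendsto_id.atTop_div_const hT))).mul_const (D 0)
  refine tendsto_of_tendsto_of_tendsto_of_le_of_le' tendsto_const_nhds hlim
    (Eventually.of_forall hD) ?_
  filter_upwards [eventually_ge_atTop 0] with t ht
  refine (hanti (by positivity : (0:ℝ) ≤ ⌊t / T⌋₊ * T) ht ?_).trans (hgeom _)
  exact (le_div_iff₀ hT).1 (Nat.floor_le (div_nonneg ht hT.le))

section Spread

variable {ι : Type*}

noncomputable def spread (y : ι → ℝ) : ℝ := ⨆ p : ι × ι, |y p.1 - y p.2|

theorem spread_nonneg (y : ι → ℝ) : 0 ≤ spread y := Real.iSup_nonneg fun _ => abs_nonneg _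

theorem spread_le_of_forall_mem_Icc [Nonempty ι] {y : ι → ℝ} {lo hi : ℝ}
    (hy : ∀ i, y i ∈ Icc lo hi) : spread y ≤ hi - lo :=
  ciSup_le fun p => by simpa [← Real.dist_eq] using Real.dist_le_of_mem_Icc (hy p.1) (hy p.2)

variable [Finite ι]

theorem abs_sub_le_spread (y : ι → ℝ) (i j : ι) : |y i - y j| ≤ spread y :=
  le_ciSup (f := fun p : ι × ι => |y p.1 - y p.2|) (Set.finite_range _).bddAbove (i, j)

theorem exists_forall_mem_Icc_spread [Nonempty ι] (y : ι → ℝ) :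
    ∃ k, ∀ i, y i ∈ Icc (y k) (y k + spread y) := by
  obtain ⟨k, hk⟩ := Finite.exists_min y
  exact ⟨k, fun i => ⟨hk i, by linarith [le_abs_self (y i - y k), abs_sub_le_spread y i k]⟩⟩

end Spread

namespace Consensus

variable {ι : Type*} [Fintype ι] {x : ι → ℝ → ℝ} {a : ι → ι → ℝ → ℝ}

theorem le_of_bounded_weights {t₀ t₁ K hi : ℝ}
    (hx : ∀ i, ∀ s ∈ Icc t₀ t₁, HasDerivAt (x i) (∑ j, a i j s * (x j s - x i s)) s)
    (ha : ∀ s ∈ Ico t₀ t₁, ∀ i j, 0 ≤ a i j s ∧ a i j s ≤ K) (h₀ : ∀ i, x i t₀ ≤ hi) :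
    ∀ s ∈ Icc t₀ t₁, ∀ i, x i s ≤ hi := by
  -- `W` measures how far the agents are above `hi`; Grönwall keeps it at its initial value `0`
  set W : ℝ → ℝ := fun s => ∑ i, max (x i s - hi) 0 ^ 2
  have hW : ∀ s ∈ Icc t₀ t₁, HasDerivAt W
      (∑ i, 2 * max (x i s - hi) 0 * ∑ j, a i j s * (x j s - x i s)) s := fun s hs =>
    HasDerivAt.fun_sum fun i _ => (hasDerivAt_max_zero_sq _).comp s ((hx i s hs).sub_const hi)
  have hbound : ∀ s ∈ Ico t₀ t₁,
      ∑ i, 2 * max (x i s - hi) 0 * ∑ j, a i j s * (x j s - x i s) ≤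
        2 * K * Fintype.card ι * W s + 0 := fun s hs => by
    calc ∑ i, 2 * max (x i s - hi) 0 * ∑ j, a i j s * (x j s - x i s)
        ≤ ∑ i, ∑ j, K * (max (x i s - hi) 0 ^ 2 + max (x j s - hi) 0 ^ 2) := by
          refine Finset.sum_le_sum fun i _ => ?_
          rw [Finset.mul_sum]
          refine Finset.sum_le_sum fun j _ => ?_
          have := two_mul_max_zero_mul_sub_le (u := x i s - hi) (v := x j s - hi)
            (ha s hs i j).1 (ha s hs i j).2
          rwa [sub_sub_sub_cancel_right] at this
      _ = 2 * K * Fintype.card ι * W s + 0 := by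
          simp only [W, mul_add, Finset.sum_add_distrib, Finset.sum_const, Finset.card_univ,
            nsmul_eq_mul, ← Finset.mul_sum]
          ring
  have hW₀ : W t₀ ≤ 0 := by
    simp [W, max_eq_right (sub_nonpos.2 (h₀ _))]
  have hgron := le_gronwallBound_of_liminf_deriv_right_le
    (fun s hs => (hW s hs).continuousAt.continuousWithinAt)
    (fun s hs _ hr => (hW s (Ico_subset_Icc_self hs)).hasDerivWithinAt.liminf_right_slope_le hr)
    hW₀ hbound
  intro s hs i
  have hWs : W s ≤ 0 := by simpa [gronwallBound_ε0_δ0] using hgron s hs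
  have hsq : max (x i s - hi) 0 ^ 2 ≤ 0 :=
    (Finset.single_le_sum (fun j _ => sq_nonneg (max (x j s - hi) 0)) (Finset.mem_univ i)).trans hWs
  nlinarith [le_max_left (x i s - hi) 0, le_max_right (x i s - hi) 0]

theorem mem_Icc_of_bounded_weights {t₀ t₁ K lo hi : ℝ}
    (hx : ∀ i, ∀ s ∈ Icc t₀ t₁, HasDerivAt (x i) (∑ j, a i j s * (x j s - x i s)) s)
    (ha : ∀ s ∈ Ico t₀ t₁, ∀ i j, 0 ≤ a i j s ∧ a i j s ≤ K) (h₀ : ∀ i, x i t₀ ∈ Icc lo hi) :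
    ∀ s ∈ Icc t₀ t₁, ∀ i, x i s ∈ Icc lo hi := by
  have hneg : ∀ i, ∀ s ∈ Icc t₀ t₁,
      HasDerivAt (fun s => -x i s) (∑ j, a i j s * (-x j s - -x i s)) s := fun i s hs => by
    refine (hx i s hs).neg.congr_deriv ?_
    simp only [← Finset.sum_neg_distrib, neg_sub_neg, ← mul_neg, neg_sub]
  intro s hs i
  exact ⟨neg_le_neg_iff.1 (le_of_bounded_weights hneg ha (fun i => neg_le_neg (h₀ i).1) s hs i),
    le_of_bounded_weights hx ha (fun i => (h₀ i).2) s hs i⟩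

theorem mem_Icc_of_locally_bounded_weights {t₀ lo hi : ℝ}
    (hx : ∀ i, ∀ s ≥ t₀, HasDerivAt (x i) (∑ j, a i j s * (x j s - x i s)) s)
    (ha : ∀ s ≥ t₀, (∀ i, x i s ∈ Icc lo hi) →
      ∃ K, ∀ᶠ s' in 𝓝[≥] s, ∀ i j, 0 ≤ a i j s' ∧ a i j s' ≤ K)
    (h₀ : ∀ i, x i t₀ ∈ Icc lo hi) : ∀ s ≥ t₀, ∀ i, x i s ∈ Icc lo hi := by
  intro t ht
  refine IsClosed.Icc_subset_of_forall_mem_nhdsWithin (s := {s | ∀ i, x i s ∈ Icc lo hi})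
    ?_ h₀ ?_ ⟨ht, le_rfl⟩
  · have hcont : ContinuousOn (fun s i => x i s) (Icc t₀ t) := fun s hs =>
      continuousAt_pi.2 (fun i => (hx i s hs.1).continuousAt) |>.continuousWithinAt
    convert hcont.preimage_isClosed_of_isClosed isClosed_Icc
      (isClosed_Icc (a := fun _ : ι => lo) (b := fun _ => hi)) using 1
    ext s
    simp [Pi.le_def, forall_and, and_comm]
  · rintro s ⟨hs, hst⟩
    obtain ⟨K, hK⟩ := ha s hst.1 hs
    obtain ⟨u, hu, hKu⟩ := mem_nhdsGE_iff_exists_Ico_subset.1 hK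
    refine mem_nhdsGT_iff_exists_Ioo_subset.2 ⟨u, hu, fun r hr => ?_⟩
    exact mem_Icc_of_bounded_weights (fun i r hr => hx i r (hst.1.trans hr.1)) (fun r hr => hKu hr)
      hs r ⟨hr.1.le, hr.2.le⟩

/-- Over a window `[t₀, t₀ + T]` the gap `hi - x i` of every agent is fed by the gap of agent `k`
through the weight `a i k ≥ w`, while all gaps decay at most at rate `Φ`. -/
theorem mul_integral_le_gap {t₀ T Φ hi : ℝ} {i k : ι} {w : ℝ → ℝ} (hT : 0 ≤ T) (hΦ : 0 ≤ Φ)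
    (hx : ∀ i, ∀ s ∈ Icc t₀ (t₀ + T), HasDerivAt (x i) (∑ j, a i j s * (x j s - x i s)) s)
    (ha : ∀ s ∈ Icc t₀ (t₀ + T), ∀ i j, 0 ≤ a i j s)
    (hrow : ∀ s ∈ Icc t₀ (t₀ + T), ∀ i, ∑ j, a i j s ≤ Φ)
    (hhi : ∀ s ∈ Icc t₀ (t₀ + T), ∀ j, x j s ≤ hi)
    (hw : ∀ s ∈ Icc t₀ (t₀ + T), 0 ≤ w s ∧ w s ≤ a i k s)
    (hwint : IntervalIntegrable w volume t₀ (t₀ + T)) :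
    exp (-(Φ * T)) ^ 2 * (hi - x k t₀) * ∫ s in t₀..t₀ + T, w s ≤ hi - x i (t₀ + T) := by
  have hgap : ∀ i, ∀ s ∈ Icc t₀ (t₀ + T), HasDerivAt (fun s => hi - x i s)
      (∑ j, a i j s * ((hi - x j s) - (hi - x i s))) s := fun i s hs =>
    ((hx i s hs).const_sub hi).congr_deriv (by
      simp only [← Finset.sum_neg_distrib, sub_sub_sub_cancel_left, ← mul_neg, neg_sub])
  have hfeed : ∀ i, ∀ s ∈ Icc t₀ (t₀ + T), a i k s * (hi - x k s) - Φ * (hi - x i s) ≤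
      ∑ j, a i j s * ((hi - x j s) - (hi - x i s)) := fun i s hs =>
    Finset.univ.mul_sub_le_sum_mul_sub (Finset.mem_univ k) (fun j _ => ha s hs i j)
      (fun j _ => sub_nonneg.2 (hhi s hs j)) (sub_nonneg.2 (hhi s hs i)) (hrow s hs i)
  have hexpT : ∀ u ∈ Icc t₀ (t₀ + T), exp (Φ * (u - t₀)) ≤ exp (Φ * T) := fun u hu =>
    exp_le_exp.2 (mul_le_mul_of_nonneg_left (by linarith [hu.2]) hΦ)
  have hk : ∀ u ∈ Icc t₀ (t₀ + T), exp (-(Φ * T)) * (hi - x k t₀) ≤ hi - x k u := fun u hu => by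
    have hsub : Icc t₀ u ⊆ Icc t₀ (t₀ + T) := Icc_subset_Icc_right hu.2
    have := add_integral_le_exp_mul_of_hasDerivAt (h := fun _ => 0) hu.1 hΦ
      (fun s hs => hgap k s (hsub hs)) (fun _ _ => le_rfl) intervalIntegrable_const
      fun s hs => by nlinarith [hfeed k s (hsub hs), ha s (hsub hs) k k, hhi s (hsub hs) k]
    rw [intervalIntegral.integral_zero, add_zero] at this
    rw [exp_neg, inv_mul_le_iff₀ (exp_pos _)]
    exact this.trans (mul_le_mul_of_nonneg_right (hexpT u hu) (sub_nonneg.2 (hhi u hu k)))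
  have ht₀ : t₀ ∈ Icc t₀ (t₀ + T) := ⟨le_rfl, by linarith⟩
  have hG : 0 ≤ exp (-(Φ * T)) * (hi - x k t₀) :=
    mul_nonneg (exp_pos _).le (sub_nonneg.2 (hhi t₀ ht₀ k))
  have hfed := add_integral_le_exp_mul_of_hasDerivAt
    (h := fun s => w s * (exp (-(Φ * T)) * (hi - x k t₀))) ht₀.2 hΦ (hgap i)
    (fun s hs => mul_nonneg (hw s hs).1 hG) (hwint.mul_const _) fun s hs => by
      have := mul_le_mul (hw s hs).2 (hk s hs) hG (ha s hs i k)
      linarith [hfeed i s hs]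
  rw [intervalIntegral.integral_mul_const, add_sub_cancel_left] at hfed
  have hfed' : (∫ s in t₀..t₀ + T, w s) * (exp (-(Φ * T)) * (hi - x k t₀)) ≤
      exp (Φ * T) * (hi - x i (t₀ + T)) := by linarith [sub_nonneg.2 (hhi t₀ ht₀ i)]
  rw [← inv_mul_le_iff₀ (exp_pos _), ← exp_neg] at hfed'
  linarith

end Consensus

section InfluenceModel

variable {ι : Type*} [Fintype ι] {κ : ℝ} {M : ι → ι → ℝ → ℝ} {φ : ℝ → ℝ} {x : ι → ℝ → ℝ}

theorem hasDerivAt_sum_influence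
    (hx : ∀ i, ∀ t ≥ (0:ℝ), HasDerivAt (x i)
      (κ * ∑ j, M i j t * φ (|x i t - x j t|) * (x j t - x i t)) t) :
    ∀ i, ∀ t ≥ (0:ℝ), HasDerivAt (x i)
      (∑ j, κ * M i j t * φ (|x i t - x j t|) * (x j t - x i t)) t := fun i t ht =>
  (hx i t ht).congr_deriv (by simp only [Finset.mul_sum, mul_assoc])

theorem influence_mem_Icc {D t₀ lo hi : ℝ} (hφ : Continuous φ) (hpos : ∀ r ∈ Icc 0 D, 0 < φ r)
    (hκ : 0 ≤ κ) (hM0 : ∀ i j s, 0 ≤ M i j s) (hM1 : ∀ i j s, M i j s ≤ 1)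
    (hx : ∀ i, ∀ t ≥ (0:ℝ), HasDerivAt (x i)
      (κ * ∑ j, M i j t * φ (|x i t - x j t|) * (x j t - x i t)) t)
    (ht₀ : 0 ≤ t₀) (hD : hi - lo ≤ D) (h₀ : ∀ i, x i t₀ ∈ Icc lo hi) :
    ∀ t ≥ t₀, ∀ i, x i t ∈ Icc lo hi := by
  obtain ⟨_, Φ, _, _, hΦ⟩ := isCompact_Icc.exists_forall_mem_Icc_of_pos hφ.continuousOn hpos
  have hx' := hasDerivAt_sum_influence hx
  refine Consensus.mem_Icc_of_locally_bounded_weights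
    (a := fun i j t => κ * M i j t * φ |x i t - x j t|) (fun i s hs => hx' i s (ht₀.trans hs))
    (fun s hs hbox => ⟨κ * (Φ + 1), ?_⟩) h₀
  have hnear : ∀ i j, ∀ᶠ s' in 𝓝 s, φ |x i s' - x j s'| ∈ Ioo 0 (Φ + 1) := fun i j => by
    have hr : |x i s - x j s| ∈ Icc 0 D :=
      ⟨abs_nonneg _, (Real.dist_le_of_mem_Icc (hbox i) (hbox j)).trans hD⟩
    have hcont : ContinuousAt (fun s' => φ |x i s' - x j s'|) s :=
      hφ.continuousAt.comp
        (((hx i s (ht₀.trans hs)).continuousAt.sub (hx j s (ht₀.trans hs)).continuousAt).abs)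
    exact hcont.eventually (Ioo_mem_nhds (hpos _ hr) (by linarith [(hΦ _ hr).2]))
  filter_upwards [nhdsWithin_le_nhds (eventually_all.2 fun i => eventually_all.2 (hnear i))]
    with s' hs' i j
  have hφ' := hs' i j
  refine ⟨mul_nonneg (mul_nonneg hκ (hM0 i j s')) hφ'.1.le, ?_⟩
  simpa using mul_le_mul (mul_le_mul_of_nonneg_left (hM1 i j s') hκ) hφ'.2.le hφ'.1.le
    (by simpa using hκ)

theorem influence_spread_le [Nonempty ι] {D : ℝ} (hφ : Continuous φ)
    (hpos : ∀ r ∈ Icc 0 D, 0 < φ r) (hκ : 0 ≤ κ) (hM0 : ∀ i j s, 0 ≤ M i j s)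
    (hM1 : ∀ i j s, M i j s ≤ 1)
    (hx : ∀ i, ∀ t ≥ (0:ℝ), HasDerivAt (x i)
      (κ * ∑ j, M i j t * φ (|x i t - x j t|) * (x j t - x i t)) t) :
    ∀ t₀ ≥ 0, spread (x · t₀) ≤ D → ∀ t ≥ t₀, spread (x · t) ≤ spread (x · t₀) := by
  intro t₀ ht₀ hD t ht
  obtain ⟨k, hk⟩ := exists_forall_mem_Icc_spread (x · t₀)
  simpa using spread_le_of_forall_mem_Icc
    (influence_mem_Icc hφ hpos hκ hM0 hM1 hx ht₀ (by simpa using hD) hk t ht)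

theorem influence_exists_contraction [Nonempty ι] {D T μ : ℝ} (hT : 0 ≤ T) (hφ : Continuous φ)
    (hpos : ∀ r ∈ Icc 0 D, 0 < φ r) (hκ : 0 < κ) (hμ : 0 < μ) (hM0 : ∀ i j s, 0 ≤ M i j s)
    (hM1 : ∀ i j s, M i j s ≤ 1) (hPE : ∀ i j, ∀ t ≥ (0:ℝ), μ ≤ ∫ s in t..(t + T), M i j s)
    (hx : ∀ i, ∀ t ≥ (0:ℝ), HasDerivAt (x i)
      (κ * ∑ j, M i j t * φ (|x i t - x j t|) * (x j t - x i t)) t) :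
    ∃ c > 0, ∀ t₀ ≥ 0, spread (x · t₀) ≤ D →
      spread (x · (t₀ + T)) ≤ (1 - c) * spread (x · t₀) := by
  obtain ⟨m, Φ, hm, hΦ, hφb⟩ := isCompact_Icc.exists_forall_mem_Icc_of_pos hφ.continuousOn hpos
  -- `Φr` bounds the row sums of the weights while the agents stay `D`-close
  set Φr := Fintype.card ι * (κ * Φ) with hΦr
  refine ⟨exp (-(Φr * T)) ^ 2 * (κ * m * μ), by positivity, fun t₀ ht₀ hD => ?_⟩
  obtain ⟨k, hk⟩ := exists_forall_mem_Icc_spread (x · t₀)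
  set S := spread (x · t₀)
  have hbox := influence_mem_Icc hφ hpos hκ.le hM0 hM1 hx ht₀ (by simpa using hD) hk
  have hφr : ∀ t ≥ t₀, ∀ i j, φ |x i t - x j t| ∈ Icc m Φ := fun t ht i j =>
    hφb _ ⟨abs_nonneg _,
      (Real.dist_le_of_mem_Icc (hbox t ht i) (hbox t ht j)).trans (by simpa using hD)⟩
  have hweight : ∀ t ≥ t₀, ∀ i j, κ * m * M i j t ≤ κ * M i j t * φ |x i t - x j t| ∧
      κ * M i j t * φ |x i t - x j t| ≤ κ * Φ := fun t ht i j => by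
    have hφ := hφr t ht i j
    have hκM := mul_nonneg hκ.le (hM0 i j t)
    refine ⟨by nlinarith [mul_le_mul_of_nonneg_left hφ.1 hκM], ?_⟩
    have := mul_le_mul (hM1 i j t) hφ.2 (hm.le.trans hφ.1) zero_le_one
    nlinarith [mul_le_mul_of_nonneg_left this hκ.le]
  have hgap : ∀ i, exp (-(Φr * T)) ^ 2 * (κ * m * μ) * S ≤ x k t₀ + S - x i (t₀ + T) := by
    intro i
    have hwint : IntervalIntegrable (fun s => κ * m * M i k s) volume t₀ (t₀ + T) :=
      (intervalIntegral.intervalIntegrable_of_integral_ne_zero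
        (hμ.trans_le (hPE i k t₀ ht₀)).ne').const_mul _
    have := Consensus.mul_integral_le_gap (a := fun i j t => κ * M i j t * φ |x i t - x j t|)
      (Φ := Φr) (i := i) (k := k) (hi := x k t₀ + S) hT (by positivity)
      (fun i s hs => hasDerivAt_sum_influence hx i s (ht₀.trans hs.1))
      (fun s hs i j =>
        (mul_nonneg (mul_nonneg hκ.le hm.le) (hM0 i j s)).trans (hweight s hs.1 i j).1)
      (fun s hs i => (Finset.sum_le_sum fun j _ => (hweight s hs.1 i j).2).trans (by simp [hΦr]))
      (fun s hs j => (hbox s hs.1 j).2)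
      (fun s hs => ⟨mul_nonneg (mul_nonneg hκ.le hm.le) (hM0 i k s), (hweight s hs.1 i k).1⟩) hwint
    rw [intervalIntegral.integral_const_mul, add_sub_cancel_left] at this
    refine le_trans ?_ this
    have := mul_le_mul_of_nonneg_left (hPE i k t₀ ht₀)
      (by have := spread_nonneg (x · t₀); positivity : 0 ≤ exp (-(Φr * T)) ^ 2 * S * (κ * m))
    linarith
  have := spread_le_of_forall_mem_Icc (y := (x · (t₀ + T))) (lo := x k t₀)
    (hi := x k t₀ + S - exp (-(Φr * T)) ^ 2 * (κ * m * μ) * S)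
    fun i => ⟨(hbox _ (by linarith) i).1, by linarith [hgap i]⟩
  linarith

end InfluenceModel

theorem PE_consensus_one_dimensional_general
    (N : ℕ)
    (T μ : ℝ) (hT : 0 < T) (hμ : 0 < μ)
    (φ : ℝ → ℝ) (L : NNReal) (hφ_lip : LipschitzWith L φ)
    (x : Fin N → ℝ → ℝ)
    (hφ_min : ∀ r ∈ Set.Icc (0:ℝ) (⨆ p : Fin N × Fin N, |x p.1 0 - x p.2 0|), 0 < φ r)
    (M : Fin N → Fin N → ℝ → ℝ)
    (hM0 : ∀ i j s, 0 ≤ M i j s) (hM1 : ∀ i j s, M i j s ≤ 1)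
    (hPE : ∀ i j, ∀ t ≥ (0:ℝ), μ ≤ ∫ s in t..(t + T), M i j s)
    (hx : ∀ i, ∀ t ≥ (0:ℝ), HasDerivAt (x i)
      ((1 / (N : ℝ)) * ∑ j, M i j t * φ (|x i t - x j t|) * (x j t - x i t)) t) :
    ∀ i j, Tendsto (fun t => x i t - x j t) atTop (nhds 0) := by
  intro i j
  have : Nonempty (Fin N) := ⟨i⟩
  have hN : (0:ℝ) < 1 / N := by have := i.pos; positivity
  have hmono := influence_spread_le hφ_lip.continuous hφ_min hN.le hM0 hM1 hx
  have hD : ∀ t ≥ 0, spread (x · t) ≤ spread (x · 0) := hmono 0 le_rfl le_rfl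
  obtain ⟨c, hc, hcontr⟩ :=
    influence_exists_contraction hT.le hφ_lip.continuous hφ_min hN hμ hM0 hM1 hPE hx
  have hlim := tendsto_zero_of_antitoneOn_of_le_mul (D := fun t => spread (x · t)) hT
    (by linarith : 1 - c < 1) (fun t => spread_nonneg _)
    (fun t₀ ht₀ t _ ht => hmono t₀ ht₀ (hD t₀ ht₀) t ht) fun t ht => hcontr t ht (hD t ht)
  exact squeeze_zero_norm
    (fun t => (Real.norm_eq_abs _).trans_le (abs_sub_le_spread (x · t) i j)) hlim

theorem PE_consensus_one_dimensional
    (N : ℕ) (hN : 2 ≤ N)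
    (T μ : ℝ) (hT : 0 < T) (hμ : 0 < μ)
    (φ : ℝ → ℝ) (L : NNReal) (hφ_lip : LipschitzWith L φ)
    (x : Fin N → ℝ → ℝ)
    (hφ_min : ∀ r ∈ Set.Icc (0:ℝ) (⨆ p : Fin N × Fin N, |x p.1 0 - x p.2 0|), 0 < φ r)
    (M : Fin N → Fin N → ℝ → ℝ)
    (hM_meas : ∀ i j, Measurable (M i j))
    (hM0 : ∀ i j s, 0 ≤ M i j s) (hM1 : ∀ i j s, M i j s ≤ 1)
    (hPE : ∀ i j, ∀ t ≥ (0:ℝ), μ ≤ ∫ s in t..(t + T), M i j s)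
    (hx : ∀ i, ∀ t ≥ (0:ℝ), HasDerivAt (x i)
      ((1 / (N : ℝ)) * ∑ j, M i j t * φ (|x i t - x j t|) * (x j t - x i t)) t) :
    ∀ i j, Tendsto (fun t => x i t - x j t) atTop (nhds 0) :=
  PE_consensus_one_dimensional_general N T μ hT hμ φ L hφ_lip x hφ_min M hM0 hM1 hPE hx
end

section
/- Let x_i : [0,∞) → R^d solve dx_i/dt = (λ_i/N) Σ_j M_{ij}(t) φ(|x_i − x_j|)(x_j − x_i) under the hypotheses: φ Lipschitz, φ_min := min{φ(r) : 0 ≤ r ≤ D(0)} > 0, each M_{ij} : [0,∞) → [0,1] measurable with ∫_t^{t+T} M_{ij}(s) ds ≥ μ for all t ≥ 0, and λ_i ≡ 1. Then all agents converge to a common limit point x* ∈ R^d: lim_{t→∞} x_i(t) = x* for every i. -/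
/-!
Testing positions against a functional `f` with `‖f‖ ≤ 1` turns the system into a scalar
consensus system `g i' = ∑ j, c i j (g j - g i)`. With nonnegative weights its maximum cannot
increase nor its minimum decrease, so the diameter never exceeds `D(0)`: since `φ > 0` on
`[0, D(0)]`, a continuity argument keeps the weights nonnegative, and they are then bounded above
by some `C` and below by `φ_min / N * M i j`.

On a window `[t, t + T]`, the integrating factor `e^{C s}` shows that the agent at the bottom
pulls every agent down by at least a fraction `θ = e^{-C T} (φ_min / N) μ` of the spread, the
persistent excitation supplying the integral. The diameter thus contracts by `1 - θ` per window,
and its geometric decay gives a common limit.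
-/

open MeasureTheory Filter
open scoped BigOperators

open Set Topology Real

theorem le_of_hasDerivAt_nonpos_at_max {ι : Type*} [Finite ι] {g g' : ι → ℝ → ℝ} {a b K : ℝ}
    (hg : ∀ t ∈ Icc a b, ∀ i, HasDerivAt (g i) (g' i t) t)
    (hg' : ∀ t ∈ Ico a b, ∀ i, (∀ j, g j t ≤ g i t) → g' i t ≤ 0) (hK : ∀ i, g i a ≤ K) :
    ∀ t ∈ Icc a b, ∀ i, g i t ≤ K := by
  cases isEmpty_or_nonempty ι
  · exact fun _ _ i => isEmptyElim i
  have := Fintype.ofFinite ι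
  set f : ℝ → ℝ := fun t => Finset.univ.sup' Finset.univ_nonempty fun i => g i t
  have hgf : ∀ t i, g i t ≤ f t := fun t i => Finset.le_sup' (fun i => g i t) (Finset.mem_univ i)
  -- the upper right Dini derivative of `f` is nonpositive: near `t`, only the maximal `g i` matter
  have hslope : ∀ t ∈ Ico a b, ∀ r > 0, ∀ᶠ z in 𝓝[>] t, f z < f t + r * (z - t) := by
    intro t ht r hr
    have hi : ∀ i, ∀ᶠ z in 𝓝[>] t, g i z < f t + r * (z - t) := by
      intro i
      have hgi := hg t (Ico_subset_Icc_self ht) i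
      rcases (hgf t i).lt_or_eq with hlt | heq
      · filter_upwards [nhdsWithin_le_nhds (hgi.continuousAt.eventually_lt continuousAt_const hlt),
          self_mem_nhdsWithin] with z hz hzt
        nlinarith [mem_Ioi.1 hzt]
      · have hmax : ∀ j, g j t ≤ g i t := fun j => heq ▸ hgf t j
        filter_upwards [hgi.hasDerivWithinAt.limsup_slope_le' (lt_irrefl t)
          ((hg' t ht i hmax).trans_lt hr), self_mem_nhdsWithin] with z hz hzt
        rw [slope_def_field, div_lt_iff₀ (sub_pos.2 hzt)] at hz
        linarith
    filter_upwards [eventually_all.2 hi] with z hz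
    exact (Finset.sup'_lt_iff _).2 fun i _ => hz i
  have hf : ∀ t ∈ Icc a b, f t ≤ K := by
    refine image_le_of_liminf_slope_right_le_deriv_boundary (f := f) (B' := 0)
      (ContinuousOn.finset_sup'_apply _ fun i _ t ht => (hg t ht i).continuousAt.continuousWithinAt)
      (Finset.sup'_le _ _ fun i _ => hK i) continuousOn_const
      (fun t _ => hasDerivWithinAt_const t _ K) fun t ht r hr => Eventually.frequently ?_
    filter_upwards [hslope t ht r hr, self_mem_nhdsWithin] with z hz hzt
    rw [slope_def_field, div_lt_iff₀ (sub_pos.2 hzt)]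
    linarith
  exact fun t ht i => (hgf t i).trans (hf t ht)

theorem exists_tendsto_of_forall_norm_sub_le {ι E : Type*} [NormedAddCommGroup E] [CompleteSpace E]
    {x : ι → ℝ → E} (h : ∀ ε > 0, ∃ τ, ∀ t ≥ τ, ∀ s ≥ τ, ∀ i j, ‖x i t - x j s‖ ≤ ε) :
    ∃ z, ∀ i, Tendsto (x i) atTop (𝓝 z) := by
  cases isEmpty_or_nonempty ι
  · exact ⟨0, isEmptyElim⟩
  obtain ⟨i₀⟩ := ‹Nonempty ι›
  have hcauchy : CauchySeq (x i₀) := Metric.cauchySeq_iff.2 fun ε hε => by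
    obtain ⟨τ, hτ⟩ := h (ε / 2) (half_pos hε)
    exact ⟨τ, fun t ht s hs => by rw [dist_eq_norm]; linarith [hτ t ht s hs i₀ i₀]⟩
  obtain ⟨z, hz⟩ := cauchySeq_tendsto_of_complete hcauchy
  refine ⟨z, fun i => Metric.tendsto_atTop.2 fun ε hε => ?_⟩
  obtain ⟨τ, hτ⟩ := h (ε / 2) (half_pos hε)
  refine ⟨τ, fun t ht => ?_⟩
  have : dist (x i t) z ≤ ε / 2 := le_of_tendsto (tendsto_const_nhds.dist hz) <|
    (eventually_ge_atTop τ).mono fun s hs => by rw [dist_eq_norm]; exact hτ t ht s hs i i₀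
  linarith

theorem ContinuousLinearMap.apply_le_norm_of_opNorm_le_one {E : Type*} [NormedAddCommGroup E]
    [NormedSpace ℝ E] (f : StrongDual ℝ E) (hf : ‖f‖ ≤ 1) (w : E) : f w ≤ ‖w‖ :=
  (Real.le_norm_self _).trans ((f.le_of_opNorm_le hf w).trans_eq (one_mul _))

section Consensus

variable {ι : Type*} [Fintype ι] {E F : Type*} [NormedAddCommGroup E] [NormedSpace ℝ E]
  [NormedAddCommGroup F] [NormedSpace ℝ F]

def IsConsensusSolutionOn (x : ι → ℝ → E) (c : ι → ι → ℝ → ℝ) (s : Set ℝ) : Prop :=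
  ∀ t ∈ s, ∀ i, HasDerivAt (x i) (∑ j, c i j t • (x j t - x i t)) t

namespace IsConsensusSolutionOn

variable {x : ι → ℝ → E} {g : ι → ℝ → ℝ} {c : ι → ι → ℝ → ℝ} {s s' : Set ℝ} {a b K : ℝ}

theorem mono (hx : IsConsensusSolutionOn x c s) (h : s' ⊆ s) : IsConsensusSolutionOn x c s' :=
  fun t ht => hx t (h ht)

theorem map (hx : IsConsensusSolutionOn x c s) (f : E →L[ℝ] F) :
    IsConsensusSolutionOn (fun i t => f (x i t)) c s := fun t ht i => by
  simpa only [map_sum, map_smul, map_sub, Function.comp_def] using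
    f.hasFDerivAt.comp_hasDerivAt t (hx t ht i)

theorem le_of_forall_le (hg : IsConsensusSolutionOn g c (Icc a b))
    (hc : ∀ t ∈ Icc a b, ∀ i j, 0 ≤ c i j t) (hK : ∀ i, g i a ≤ K) :
    ∀ t ∈ Icc a b, ∀ i, g i t ≤ K :=
  le_of_hasDerivAt_nonpos_at_max hg (fun t ht i hmax => Finset.sum_nonpos fun j _ =>
    smul_nonpos_of_nonneg_of_nonpos (hc t (Ico_subset_Icc_self ht) i j) (sub_nonpos.2 (hmax j))) hK

theorem ge_of_forall_ge (hg : IsConsensusSolutionOn g c (Icc a b))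
    (hc : ∀ t ∈ Icc a b, ∀ i j, 0 ≤ c i j t) (hK : ∀ i, K ≤ g i a) :
    ∀ t ∈ Icc a b, ∀ i, K ≤ g i t := by
  have h := (hg.map (-ContinuousLinearMap.id ℝ ℝ)).le_of_forall_le hc (K := -K) (by simpa using hK)
  intro t ht i
  simpa using h t ht i

/-- Agent `l` drags agent `k` down from the upper bound `K` in proportion to its own gap
`K - g l a` and to its accumulated influence `∫ ρ` on `k`. -/
theorem exp_mul_integral_mul_sub_le_sub {ρ : ℝ → ℝ} {C : ℝ} {k l : ι}
    (hg : IsConsensusSolutionOn g c (Icc a b)) (hab : a ≤ b)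
    (hc : ∀ t ∈ Icc a b, ∀ i j, 0 ≤ c i j t) (hC : ∀ t ∈ Icc a b, ∀ i, ∑ j, c i j t ≤ C)
    (hρ : ∀ t ∈ Icc a b, ρ t ≤ c k l t) (hK : ∀ i, g i a ≤ K) :
    exp (-(C * (b - a))) * (∫ t in a..b, ρ t) * (K - g l a) ≤ K - g k b := by
  have hgap : ∀ t ∈ Icc a b, ∀ i, 0 ≤ K - g i t :=
    fun t ht i => sub_nonneg.2 (hg.le_of_forall_le hc hK t ht i)
  set G : ι → ℝ → ℝ := fun i t => exp (C * t) * (K - g i t)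
  set G' : ι → ℝ → ℝ :=
    fun i t => exp (C * t) * (C * (K - g i t) - ∑ j, c i j t * (g j t - g i t))
  have hG : ∀ t ∈ Icc a b, ∀ i, HasDerivAt (G i) (G' i t) t := by
    intro t ht i
    refine (((hasDerivAt_id' t).const_mul C).exp.fun_mul ((hg t ht i).const_sub K)).congr_deriv ?_
    simp only [G', smul_eq_mul]
    ring
  -- `C` dominates the row sums, so `G i` grows at least as fast as `e^{Ct} c i l (K - g l)`
  have hG' : ∀ t ∈ Icc a b, ∀ i, exp (C * t) * (c i l t * (K - g l t)) ≤ G' i t := by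
    intro t ht i
    have hsum : ∑ j, c i j t * (g j t - g i t)
        = (∑ j, c i j t) * (K - g i t) - ∑ j, c i j t * (K - g j t) := by
      rw [Finset.sum_mul, ← Finset.sum_sub_distrib]
      exact Finset.sum_congr rfl fun j _ => by ring
    have hl : c i l t * (K - g l t) ≤ ∑ j, c i j t * (K - g j t) :=
      Finset.single_le_sum (f := fun j => c i j t * (K - g j t))
        (fun j _ => mul_nonneg (hc t ht i j) (hgap t ht j)) (Finset.mem_univ l)
    have hrow := mul_le_mul_of_nonneg_right (hC t ht i) (hgap t ht i)
    simp only [G']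
    gcongr
    rw [hsum]
    linarith
  have hGl : ∀ t ∈ Icc a b, G l a ≤ G l t := by
    refine fun t ht => monotoneOn_of_hasDerivWithinAt_nonneg (convex_Icc a b)
      (fun t ht => (hG t ht l).continuousAt.continuousWithinAt)
      (fun t ht => (hG t (interior_subset ht) l).hasDerivWithinAt) (fun t ht => ?_)
      (left_mem_Icc.2 (ht.1.trans ht.2)) ht ht.1
    have ht' := interior_subset ht
    exact (mul_nonneg (exp_pos _).le (mul_nonneg (hc t ht' l l) (hgap t ht' l))).trans (hG' t ht' l)
  by_cases hρi : IntervalIntegrable ρ volume a b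
  swap
  · rw [intervalIntegral.integral_undef hρi, mul_zero, zero_mul]
    exact hgap b (right_mem_Icc.2 hab) k
  have hint := intervalIntegral.integral_le_sub_of_hasDeriv_right_of_le hab
    (fun t ht => (hG t ht k).continuousAt.continuousWithinAt)
    (fun t ht => (hG t (Ioo_subset_Icc_self ht) k).hasDerivWithinAt)
    ((intervalIntegrable_iff_integrableOn_Icc_of_le hab).1 (hρi.const_mul (G l a)))
    (fun t ht => ?_)
  swap
  · have ht' := Ioo_subset_Icc_self ht
    calc G l a * ρ t ≤ G l a * c k l t :=
          mul_le_mul_of_nonneg_left (hρ t ht') (mul_nonneg (exp_pos _).le (hgap a ⟨le_rfl, hab⟩ l))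
      _ ≤ G l t * c k l t := mul_le_mul_of_nonneg_right (hGl t ht') (hc t ht' k l)
      _ = exp (C * t) * (c k l t * (K - g l t)) := by ring
      _ ≤ G' k t := hG' t ht' k
  rw [intervalIntegral.integral_const_mul] at hint
  have hGk : 0 ≤ G k a := mul_nonneg (exp_pos _).le (hgap a ⟨le_rfl, hab⟩ k)
  calc exp (-(C * (b - a))) * (∫ t in a..b, ρ t) * (K - g l a)
      = exp (-(C * b)) * (G l a * ∫ t in a..b, ρ t) := by
        simp only [G]
        rw [show -(C * (b - a)) = -(C * b) + C * a by ring, exp_add]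
        ring
    _ ≤ exp (-(C * b)) * G k b := by gcongr; linarith
    _ = K - g k b := by simp only [G]; rw [← mul_assoc, ← exp_add]; simp

theorem norm_sub_le (hx : IsConsensusSolutionOn x c (Icc a b))
    (hc : ∀ t ∈ Icc a b, ∀ i j, 0 ≤ c i j t) (hK : ∀ i j, ‖x i a - x j a‖ ≤ K) {t t' : ℝ}
    (ht : t ∈ Icc a b) (ht' : t' ∈ Icc a b) (i j : ι) : ‖x i t - x j t'‖ ≤ K := by
  obtain ⟨f, hf, hfx⟩ := exists_dual_vector'' ℝ (x i t - x j t')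
  have : Nonempty ι := ⟨i⟩
  obtain ⟨iM, hiM⟩ := Finite.exists_max fun k => f (x k a)
  obtain ⟨im, him⟩ := Finite.exists_min fun k => f (x k a)
  have hup := (hx.map f).le_of_forall_le hc hiM t ht i
  have hlow := (hx.map f).ge_of_forall_ge hc him t' ht' j
  have hspread := (f.apply_le_norm_of_opNorm_le_one hf _).trans (hK iM im)
  rw [map_sub] at hfx hspread
  simp only [RCLike.ofReal_real_eq_id, id] at hup hlow hfx
  linarith

theorem norm_sub_le_one_sub_mul {ρ : ι → ι → ℝ → ℝ} {C θ : ℝ}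
    (hx : IsConsensusSolutionOn x c (Icc a b)) (hab : a ≤ b)
    (hc : ∀ t ∈ Icc a b, ∀ i j, 0 ≤ c i j t) (hC : ∀ t ∈ Icc a b, ∀ i, ∑ j, c i j t ≤ C)
    (hρ : ∀ t ∈ Icc a b, ∀ i j, ρ i j t ≤ c i j t)
    (hθ : ∀ i j, θ ≤ exp (-(C * (b - a))) * ∫ t in a..b, ρ i j t) (hθ1 : θ ≤ 1)
    (hK : ∀ i j, ‖x i a - x j a‖ ≤ K) (i j : ι) : ‖x i b - x j b‖ ≤ (1 - θ) * K := by
  obtain ⟨f, hf, hfx⟩ := exists_dual_vector'' ℝ (x i b - x j b)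
  have : Nonempty ι := ⟨i⟩
  obtain ⟨iM, hiM⟩ := Finite.exists_max fun k => f (x k a)
  obtain ⟨im, him⟩ := Finite.exists_min fun k => f (x k a)
  have hpull := (hx.map f).exp_mul_integral_mul_sub_le_sub hab hc hC (fun t ht => hρ t ht i im) hiM
  have hlow := (hx.map f).ge_of_forall_ge hc him b (right_mem_Icc.2 hab) j
  have hspread := (f.apply_le_norm_of_opNorm_le_one hf _).trans (hK iM im)
  have hgap : θ * (f (x iM a) - f (x im a)) ≤ f (x iM a) - f (x i b) :=
    (mul_le_mul_of_nonneg_right (hθ i im) (sub_nonneg.2 (him iM))).trans hpull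
  rw [map_sub] at hfx hspread
  simp only [RCLike.ofReal_real_eq_id, id] at hlow hfx
  nlinarith

theorem norm_sub_le_of_eventually_nonneg (hx : IsConsensusSolutionOn x c (Ici a))
    (hc : ∀ t ≥ a, (∀ i j, ‖x i t - x j t‖ ≤ K) → ∀ᶠ s in 𝓝 t, ∀ i j, 0 ≤ c i j s)
    (hK : ∀ i j, ‖x i a - x j a‖ ≤ K) {t : ℝ} (ht : a ≤ t) (i j : ι) : ‖x i t - x j t‖ ≤ K := by
  set S := {s | ∀ i j, ‖x i s - x j s‖ ≤ K}
  have hcont : ContinuousOn (fun s i j => ‖x i s - x j s‖) (Icc a t) :=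
    fun s hs => continuousAt_pi.2 (fun i => continuousAt_pi.2 fun j =>
      ((hx s hs.1 i).continuousAt.sub (hx s hs.1 j).continuousAt).norm) |>.continuousWithinAt
  have hclosed : IsClosed (S ∩ Icc a t) := by
    rw [inter_comm]
    have hU : IsClosed {v : ι → ι → ℝ | ∀ i j, v i j ≤ K} := by
      simp only [ofPred_forall]
      exact isClosed_iInter fun i => isClosed_iInter fun j =>
        isClosed_le (by fun_prop) continuous_const
    exact hcont.preimage_isClosed_of_isClosed isClosed_Icc hU
  refine hclosed.Icc_subset_of_forall_mem_nhdsWithin hK (fun s hs => ?_) ⟨ht, le_rfl⟩ i j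
  obtain ⟨ε, hε, hball⟩ := Metric.eventually_nhds_iff.1 (hc s hs.2.1 hs.1)
  refine mem_of_superset (Ioo_mem_nhdsGT (half_pos hε |> lt_add_of_pos_right s)) fun r hr => ?_
  have hsr : Icc s (s + ε / 2) ⊆ Ici a := fun u hu => hs.2.1.trans hu.1
  refine fun i j => (hx.mono hsr).norm_sub_le (fun u hu => hball ?_) hs.1 (Ioo_subset_Icc_self hr)
    (Ioo_subset_Icc_self hr) i j
  rw [Real.dist_eq, abs_lt]
  constructor <;> linarith [hu.1, hu.2]

theorem norm_sub_le_of_forall_pos {w : ι → ι → ℝ → ℝ} {φ : ℝ → ℝ}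
    (hx : IsConsensusSolutionOn x (fun i j t => w i j t * φ ‖x i t - x j t‖) (Ici a))
    (hw : ∀ i j t, 0 ≤ w i j t) (hφ : Continuous φ) (hφK : ∀ r ∈ Icc 0 K, 0 < φ r)
    (hK : ∀ i j, ‖x i a - x j a‖ ≤ K) {t : ℝ} (ht : a ≤ t) (i j : ι) : ‖x i t - x j t‖ ≤ K := by
  refine hx.norm_sub_le_of_eventually_nonneg (fun s hs hKs => ?_) hK ht i j
  refine eventually_all.2 fun i => eventually_all.2 fun j => ?_
  have hcont : ContinuousAt (fun s => φ ‖x i s - x j s‖) s :=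
    hφ.continuousAt.comp ((hx s hs i).continuousAt.sub (hx s hs j).continuousAt).norm
  filter_upwards [hcont.eventually (lt_mem_nhds (hφK _ ⟨norm_nonneg _, hKs i j⟩))] with u hu
  exact mul_nonneg (hw i j u) hu.le

theorem exists_tendsto [CompleteSpace E] {ρ : ι → ι → ℝ → ℝ} {C T μ : ℝ}
    (hx : IsConsensusSolutionOn x c (Ici 0)) (hc : ∀ t ≥ 0, ∀ i j, 0 ≤ c i j t)
    (hC : ∀ t ≥ 0, ∀ i, ∑ j, c i j t ≤ C) (hρ : ∀ t ≥ 0, ∀ i j, ρ i j t ≤ c i j t)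
    (hT : 0 ≤ T) (hμ : 0 < μ) (hPE : ∀ t ≥ 0, ∀ i j, μ ≤ ∫ s in t..t + T, ρ i j s) :
    ∃ z, ∀ i, Tendsto (x i) atTop (𝓝 z) := by
  set θ := min (exp (-(C * T)) * μ) 1
  have hθ : 0 < θ := lt_min (by positivity) one_pos
  have hθ1 : θ ≤ 1 := min_le_right _ _
  have hwindow : ∀ t ≥ 0, ∀ K, (∀ i j, ‖x i t - x j t‖ ≤ K) →
      ∀ i j, ‖x i (t + T) - x j (t + T)‖ ≤ (1 - θ) * K := fun t ht K hK =>
    have hsub : Icc t (t + T) ⊆ Ici 0 := fun s hs => ht.trans hs.1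
    (hx.mono hsub).norm_sub_le_one_sub_mul (by linarith) (fun s hs => hc s (hsub hs))
      (fun s hs => hC s (hsub hs)) (fun s hs => hρ s (hsub hs))
      (fun i j => (min_le_left _ _).trans (by rw [add_sub_cancel_left]; gcongr; exact hPE t ht i j))
      hθ1 hK
  obtain ⟨D, hD⟩ := (Set.finite_range fun p : ι × ι => ‖x p.1 0 - x p.2 0‖).bddAbove
  have hgeom : ∀ n : ℕ, ∀ i j, ‖x i (n * T) - x j (n * T)‖ ≤ (1 - θ) ^ n * D := by
    intro n
    induction n with
    | zero => simpa using fun i j => hD ⟨(i, j), rfl⟩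
    | succ n ih =>
      intro i j
      rw [Nat.cast_succ, add_one_mul, pow_succ', mul_assoc]
      exact hwindow _ (by positivity) _ ih i j
  refine exists_tendsto_of_forall_norm_sub_le fun ε hε => ?_
  have hdecay :=
    (tendsto_pow_atTop_nhds_zero_of_lt_one (r := 1 - θ) (by linarith) (by linarith)).mul_const D
  obtain ⟨n, hn⟩ := (hdecay.eventually (gt_mem_nhds (by simpa using hε))).exists
  refine ⟨n * T, fun t ht s hs i j => ?_⟩
  have hsub : Icc (n * T : ℝ) (max t s) ⊆ Ici 0 :=
    fun u hu => (by positivity : (0 : ℝ) ≤ n * T).trans hu.1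
  exact ((hx.mono hsub).norm_sub_le (fun u hu => hc u (hsub hu)) (hgeom n) ⟨ht, le_max_left t s⟩
    ⟨hs, le_max_right t s⟩ i j).trans hn.le

theorem exists_tendsto_of_forall_pos [CompleteSpace E] {w : ι → ι → ℝ → ℝ} {φ : ℝ → ℝ}
    {D κ T μ : ℝ} (hx : IsConsensusSolutionOn x (fun i j t => w i j t * φ ‖x i t - x j t‖) (Ici 0))
    (hw : ∀ i j t, 0 ≤ w i j t) (hwκ : ∀ i j t, w i j t ≤ κ) (hφ : Continuous φ)
    (hφD : ∀ r ∈ Icc 0 D, 0 < φ r) (hD : ∀ i j, ‖x i 0 - x j 0‖ ≤ D) (hT : 0 ≤ T) (hμ : 0 < μ)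
    (hPE : ∀ t ≥ 0, ∀ i j, μ ≤ ∫ s in t..t + T, w i j s) :
    ∃ z, ∀ i, Tendsto (x i) atTop (𝓝 z) := by
  rcases isEmpty_or_nonempty ι with _ | ⟨⟨i₀⟩⟩
  · exact ⟨0, isEmptyElim⟩
  have hD₀ : (Icc 0 D).Nonempty := nonempty_Icc.2 ((norm_nonneg _).trans (hD i₀ i₀))
  obtain ⟨r₀, hr₀, hmin⟩ := isCompact_Icc.exists_isMinOn hD₀ hφ.continuousOn
  obtain ⟨r₁, -, hmax⟩ := isCompact_Icc.exists_isMaxOn hD₀ hφ.continuousOn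
  have hφr₀ : 0 < φ r₀ := hφD r₀ hr₀
  have hφt : ∀ t ≥ 0, ∀ i j, φ r₀ ≤ φ ‖x i t - x j t‖ ∧ φ ‖x i t - x j t‖ ≤ φ r₁ := fun t ht i j =>
    have hr : ‖x i t - x j t‖ ∈ Icc 0 D :=
      ⟨norm_nonneg _, hx.norm_sub_le_of_forall_pos hw hφ hφD hD ht i j⟩
    ⟨hmin hr, hmax hr⟩
  refine hx.exists_tendsto (ρ := fun i j t => φ r₀ * w i j t)
    (C := Fintype.card ι * (κ * φ r₁)) (μ := φ r₀ * μ)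
    (fun t ht i j => mul_nonneg (hw i j t) (hφr₀.trans_le (hφt t ht i j).1).le)
    (fun t ht i => ?_) (fun t ht i j => ?_) hT (by positivity) (fun t ht i j => ?_)
  · refine (Finset.sum_le_card_nsmul _ _ _ fun j _ => ?_).trans_eq
      (by rw [Finset.card_univ, nsmul_eq_mul])
    exact mul_le_mul (hwκ i j t) (hφt t ht i j).2 (hφr₀.trans_le (hφt t ht i j).1).le
      ((hw i j t).trans (hwκ i j t))
  · rw [mul_comm]
    exact mul_le_mul_of_nonneg_left (hφt t ht i j).1 (hw i j t)
  · rw [intervalIntegral.integral_const_mul]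
    exact mul_le_mul_of_nonneg_left (hPE t ht i j) hφr₀.le

end IsConsensusSolutionOn

end Consensus

theorem PE_consensus_multidimensional_general
    (N d : ℕ) (hN : 2 ≤ N)
    (T μ : ℝ) (hT : 0 < T) (hμ : 0 < μ)
    (φ : ℝ → ℝ) (L : NNReal) (hφ_lip : LipschitzWith L φ)
    (x : Fin N → ℝ → EuclideanSpace ℝ (Fin d))
    (hφ_min : ∀ r ∈ Set.Icc (0:ℝ) (⨆ p : Fin N × Fin N, ‖x p.1 0 - x p.2 0‖), 0 < φ r)
    (M : Fin N → Fin N → ℝ → ℝ)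
    (hM0 : ∀ i j s, 0 ≤ M i j s) (hM1 : ∀ i j s, M i j s ≤ 1)
    (hPE : ∀ i j, ∀ t ≥ (0:ℝ), μ ≤ ∫ s in t..(t + T), M i j s)
    (hx : ∀ i, ∀ t ≥ (0:ℝ), HasDerivAt (x i)
      ((1 / (N : ℝ)) • ∑ j, (M i j t * φ (‖x i t - x j t‖)) • (x j t - x i t)) t) :
    ∃ xstar : EuclideanSpace ℝ (Fin d),
      ∀ i, Tendsto (x i) atTop (nhds xstar) := by
  have hNpos : (0 : ℝ) < N := by exact_mod_cast (by omega : 0 < N)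
  refine IsConsensusSolutionOn.exists_tendsto_of_forall_pos
    (w := fun i j t => 1 / (N : ℝ) * M i j t) (κ := 1 / N) (μ := 1 / N * μ) (fun t ht i => ?_)
    (fun i j t => mul_nonneg (by positivity) (hM0 i j t))
    (fun i j t => mul_le_of_le_one_right (by positivity) (hM1 i j t)) hφ_lip.continuous hφ_min
    (fun i j => le_ciSup (f := fun p : Fin N × Fin N => ‖x p.1 0 - x p.2 0‖)
      (Set.finite_range _).bddAbove (i, j)) hT.le (by positivity) (fun t ht i j => ?_)
  · simpa only [Finset.smul_sum, smul_smul, mul_assoc] using hx i t ht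
  · rw [intervalIntegral.integral_const_mul]
    exact mul_le_mul_of_nonneg_left (hPE i j t ht) (by positivity)

theorem PE_consensus_multidimensional
    (N d : ℕ) (hN : 2 ≤ N)
    (T μ : ℝ) (hT : 0 < T) (hμ : 0 < μ)
    (φ : ℝ → ℝ) (L : NNReal) (hφ_lip : LipschitzWith L φ)
    (x : Fin N → ℝ → EuclideanSpace ℝ (Fin d))
    (hφ_min : ∀ r ∈ Set.Icc (0:ℝ) (⨆ p : Fin N × Fin N, ‖x p.1 0 - x p.2 0‖), 0 < φ r)
    (M : Fin N → Fin N → ℝ → ℝ)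
    (hM_meas : ∀ i j, Measurable (M i j))
    (hM0 : ∀ i j s, 0 ≤ M i j s) (hM1 : ∀ i j s, M i j s ≤ 1)
    (hPE : ∀ i j, ∀ t ≥ (0:ℝ), μ ≤ ∫ s in t..(t + T), M i j s)
    (hx : ∀ i, ∀ t ≥ (0:ℝ), HasDerivAt (x i)
      ((1 / (N : ℝ)) • ∑ j, (M i j t * φ (‖x i t - x j t‖)) • (x j t - x i t)) t) :
    ∃ xstar : EuclideanSpace ℝ (Fin d),
      ∀ i, Tendsto (x i) atTop (nhds xstar) :=
  PE_consensus_multidimensional_general N d hN T μ hT hμ φ L hφ_lip x hφ_min M hM0 hM1 hPE hx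
end
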